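/- arXiv:2212.07090 — 5 statements merged into one kernel-verified Lean document; each statement's English description precedes it below -/
import Mathlib

section
/- Let D ~ Binomial(n, p) with 0 < p < 1, and let δ ∈ (0, p]. Then Pr(D ≤ nδ) ≤ 2^{−n·D(δ‖p)}, where D(δ‖p) = δ log₂(δ/p) + (1−δ) log₂((1−δ)/(1−p)) is the binary Kullback–Leibler divergence. -/
/-- The binary Kullback–Leibler divergence `D(a‖p)` between Bernoulli distributions,
in base-2 logarithms. -/
noncomputable def klBin (a p : ℝ) : ℝ :=
  a * Real.logb 2 (a / p) + (1 - a) * Real.logb 2 ((1 - a) / (1 - p))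

/-- Chernoff bound for the lower tail of a Binomial(n, p):
for `0 < δ ≤ p`, `Pr(D ≤ nδ) ≤ 2^{-n D(δ‖p)}`. -/
theorem binomial_lower_tail_chernoff (n : ℕ) (p δ : ℝ)
    (hp0 : 0 < p) (hp1 : p < 1) (hδ0 : 0 < δ) (hδp : δ ≤ p) :
    ∑ k ∈ Finset.range (n + 1),
        (if (k : ℝ) ≤ n * δ then (n.choose k : ℝ) * p ^ k * (1 - p) ^ (n - k) else 0)
      ≤ (2 : ℝ) ^ (-(n : ℝ) * klBin δ p) := by
  have hδ1 : δ < 1 := lt_of_le_of_lt hδp hp1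
  have h1δ : (0:ℝ) < 1 - δ := by linarith
  have h1p : (0:ℝ) < 1 - p := by linarith
  set t : ℝ := δ * (1 - p) / ((1 - δ) * p) with ht_def
  have ht : 0 < t := by positivity
  have ht1 : t ≤ 1 := by
    rw [ht_def, div_le_one (by positivity)]
    nlinarith
  have step1 : ∑ k ∈ Finset.range (n + 1),
        (if (k : ℝ) ≤ n * δ then (n.choose k : ℝ) * p ^ k * (1 - p) ^ (n - k) else 0)
      ≤ ∑ k ∈ Finset.range (n + 1),
        (n.choose k : ℝ) * p ^ k * (1 - p) ^ (n - k) * t ^ ((k : ℝ) - n * δ) := by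
    apply Finset.sum_le_sum
    intro k hk
    by_cases h : (k : ℝ) ≤ n * δ
    · simp only [h, if_true]
      nth_rewrite 1 [← mul_one ((n.choose k : ℝ) * p ^ k * (1 - p) ^ (n - k))]
      apply mul_le_mul_of_nonneg_left _ (by positivity)
      exact Real.one_le_rpow_of_pos_of_le_one_of_nonpos ht ht1 (by linarith)
    · simp only [h, if_false]
      positivity
  have hsum : ∑ k ∈ Finset.range (n + 1),
        (n.choose k : ℝ) * p ^ k * (1 - p) ^ (n - k) * t ^ ((k : ℝ) - n * δ)
      = t ^ (-((n : ℝ) * δ)) * (p * t + (1 - p)) ^ n := by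
    rw [add_pow, Finset.mul_sum]
    apply Finset.sum_congr rfl
    intro k hk
    rw [Real.rpow_sub ht, Real.rpow_natCast, Real.rpow_neg ht.le, mul_pow]
    ring
  have hpt : p * t + (1 - p) = (1 - p) / (1 - δ) := by
    rw [ht_def]
    field_simp
    ring
  have key : t ^ (-((n : ℝ) * δ)) * ((1 - p) / (1 - δ)) ^ n
      = (2 : ℝ) ^ (-(n : ℝ) * klBin δ p) := by
    have h2 : Real.log 2 ≠ 0 := by
      have := Real.log_pos (by norm_num : (1:ℝ) < 2); linarith
    have hlogt : Real.log t = Real.log δ + Real.log (1 - p)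
        - (Real.log (1 - δ) + Real.log p) := by
      rw [ht_def, Real.log_div (by positivity) (by positivity),
        Real.log_mul hδ0.ne' h1p.ne', Real.log_mul h1δ.ne' hp0.ne']
    have hLpos : 0 < t ^ (-((n : ℝ) * δ)) * ((1 - p) / (1 - δ)) ^ n := by positivity
    have hRpos : 0 < (2 : ℝ) ^ (-(n : ℝ) * klBin δ p) := by positivity
    apply Real.log_injOn_pos (Set.mem_Ioi.mpr hLpos) (Set.mem_Ioi.mpr hRpos)
    rw [Real.log_mul (by positivity) (by positivity), Real.log_rpow ht,
      Real.log_pow, Real.log_rpow (by norm_num : (0:ℝ) < 2), klBin]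
    simp only [Real.logb, Real.log_div h1p.ne' h1δ.ne', Real.log_div hδ0.ne' hp0.ne',
      Real.log_div h1δ.ne' h1p.ne', hlogt]
    field_simp
    ring
  calc ∑ k ∈ Finset.range (n + 1),
        (if (k : ℝ) ≤ n * δ then (n.choose k : ℝ) * p ^ k * (1 - p) ^ (n - k) else 0)
      ≤ ∑ k ∈ Finset.range (n + 1),
        (n.choose k : ℝ) * p ^ k * (1 - p) ^ (n - k) * t ^ ((k : ℝ) - n * δ) := step1
    _ = t ^ (-((n : ℝ) * δ)) * (p * t + (1 - p)) ^ n := hsum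
    _ = t ^ (-((n : ℝ) * δ)) * ((1 - p) / (1 - δ)) ^ n := by rw [hpt]
    _ = (2 : ℝ) ^ (-(n : ℝ) * klBin δ p) := key
end

section
/- Let D ~ Binomial(n, p) with 0 < p < 1, and let δ ∈ (0, p) be such that nδ is an integer. Then Pr(D ≤ nδ) ≥ 2^{−n·D(δ‖p)} / √(2n), where D(δ‖p) is the binary KL divergence in base 2. -/
/-!
The lower tail is at least its single term at `k = nδ = d`, and with `m = n - d`,
`2^{-n D(δ‖p)} = (p/δ)^d ((1-p)/(1-δ))^m`, so it suffices that
`n^n ≤ C(n, d) d^d m^m √(2n)`. Writing `k! = s_k √(2k) (k/e)^k` with `s` the Stirling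
sequence, this is `s_d s_m √(dm) ≤ n s_n`, which follows from `√π ≤ s_k` together with
`s_k ≤ s_2 = e²/4` for `k ≥ 2` (and is an equality when `d = m = 1`).
-/

open Real Stirling Nat

lemma stirlingSeq_antitoneOn : AntitoneOn stirlingSeq (Set.Ici 1) := by
  intro a ha b hb hab
  obtain ⟨a, rfl⟩ := Nat.exists_eq_add_of_le' (Set.mem_Ici.mp ha)
  obtain ⟨b, rfl⟩ := Nat.exists_eq_add_of_le' (Set.mem_Ici.mp hb)
  exact stirlingSeq'_antitone (by omega : a ≤ b)

lemma stirlingSeq_pos {k : ℕ} (hk : k ≠ 0) : 0 < stirlingSeq k :=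
  (sqrt_pos.mpr pi_pos).trans_le (sqrt_pi_le_stirlingSeq hk)

lemma stirlingSeq_two : stirlingSeq 2 = exp 1 ^ 2 / 4 := by
  have hsqrt : √(2 * (2 : ℕ)) = 2 := by
    rw [show (2 * (2 : ℕ) : ℝ) = 2 ^ 2 by norm_num, sqrt_sq zero_le_two]
  rw [stirlingSeq, hsqrt, factorial_two]
  field_simp
  norm_num

lemma stirlingSeq_le_of_two_le {k : ℕ} (hk : 2 ≤ k) : stirlingSeq k ≤ exp 1 ^ 2 / 4 :=
  stirlingSeq_two ▸ stirlingSeq_antitoneOn (by simp) (by simp; omega) hk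

lemma sqrt_pi_gt_d2 : (1.77 : ℝ) < √π :=
  lt_sqrt_of_sq_lt (by linarith [pi_gt_d2])

lemma three_mul_sqrt_le_sqrt_two_mul {x : ℝ} (hx : 2 ≤ x) : 3 * √x ≤ √2 * (x + 1) := by
  rw [← sqrt_mul_self (by positivity : (0 : ℝ) ≤ 3), ← sqrt_mul (by positivity),
    ← sqrt_mul_self (by positivity : 0 ≤ x + 1), ← sqrt_mul zero_le_two]
  exact sqrt_le_sqrt (by nlinarith)

lemma stirlingSeq_one_mul_stirlingSeq_mul_sqrt_le {m : ℕ} (hm : 2 ≤ m) :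
    stirlingSeq 1 * stirlingSeq m * √m ≤ (1 + m) * stirlingSeq (1 + m) := by
  have he := exp_one_lt_d9
  have hsqrt : 3 * √(m : ℝ) ≤ √2 * (m + 1) := three_mul_sqrt_le_sqrt_two_mul (by exact_mod_cast hm)
  rw [stirlingSeq_one]
  calc exp 1 / √2 * stirlingSeq m * √(m : ℝ)
      ≤ exp 1 / √2 * (exp 1 ^ 2 / 4) * (√2 * (m + 1) / 3) := by
        gcongr
        · exact stirlingSeq_le_of_two_le hm
        · linarith
    _ = exp 1 ^ 3 / 12 * (m + 1) := by field_simp; ring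
    _ ≤ 1.77 * (1 + m) := by
        have : exp 1 ^ 3 ≤ 21 := by nlinarith [pow_le_pow_left₀ (exp_pos 1).le he.le 3]
        nlinarith [(by positivity : (0 : ℝ) ≤ m + 1)]
    _ ≤ (1 + m) * stirlingSeq (1 + m) := by
        rw [mul_comm]
        gcongr
        exact sqrt_pi_gt_d2.le.trans (sqrt_pi_le_stirlingSeq (by omega))

lemma stirlingSeq_mul_stirlingSeq_mul_sqrt_le_of_two_le {d m : ℕ} (hd : 2 ≤ d) (hm : 2 ≤ m) :
    stirlingSeq d * stirlingSeq m * √(d * m) ≤ (d + m) * stirlingSeq (d + m) := by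
  have he := exp_one_lt_d9
  have hsqrt : √((d : ℝ) * m) ≤ (d + m) / 2 := by
    rw [sqrt_le_left (by positivity)]
    nlinarith [sq_nonneg ((d : ℝ) - m)]
  calc stirlingSeq d * stirlingSeq m * √(d * m)
      ≤ exp 1 ^ 2 / 4 * (exp 1 ^ 2 / 4) * ((d + m) / 2) := by
        gcongr
        · exact (stirlingSeq_pos (by omega)).le
        · exact stirlingSeq_le_of_two_le hd
        · exact stirlingSeq_le_of_two_le hm
    _ ≤ 1.77 * (d + m) := by
        have : exp 1 ^ 4 ≤ 56 := by nlinarith [pow_le_pow_left₀ (exp_pos 1).le he.le 4]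
        nlinarith [(by positivity : (0 : ℝ) ≤ d + m)]
    _ ≤ (d + m) * stirlingSeq (d + m) := by
        rw [mul_comm]
        gcongr
        exact sqrt_pi_gt_d2.le.trans (sqrt_pi_le_stirlingSeq (by omega))

lemma stirlingSeq_mul_stirlingSeq_mul_sqrt_le {d m : ℕ} (hd : d ≠ 0) (hm : m ≠ 0) :
    stirlingSeq d * stirlingSeq m * √(d * m) ≤ (d + m) * stirlingSeq (d + m) := by
  wlog hdm : d ≤ m generalizing d m
  · have := this hm hd (by omega)
    rwa [mul_comm (stirlingSeq m), mul_comm (m : ℝ), add_comm (m : ℝ), add_comm m] at this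
  obtain ⟨rfl, rfl⟩ | ⟨rfl, hm2⟩ | hd2 : (d = 1 ∧ m = 1) ∨ (d = 1 ∧ 2 ≤ m) ∨ 2 ≤ d := by omega
  · rw [show 1 + 1 = 2 from rfl, stirlingSeq_two, stirlingSeq_one]
    have : √2 * √2 = 2 := mul_self_sqrt zero_le_two
    field_simp
    norm_num [this]
  · simpa only [Nat.cast_one, one_mul] using stirlingSeq_one_mul_stirlingSeq_mul_sqrt_le hm2
  · exact stirlingSeq_mul_stirlingSeq_mul_sqrt_le_of_two_le hd2 (hd2.trans hdm)

lemma factorial_eq_stirlingSeq_mul {k : ℕ} (hk : k ≠ 0) :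
    (k ! : ℝ) = stirlingSeq k * √(2 * k) * (k / exp 1) ^ k := by
  rw [mul_assoc, stirlingSeq, div_mul_cancel₀ _ (by positivity)]

lemma add_pow_add_le_choose_mul_sqrt {d m : ℕ} (hd : d ≠ 0) (hm : m ≠ 0) :
    ((d + m : ℕ) : ℝ) ^ (d + m) ≤ (d + m).choose d * d ^ d * m ^ m * √(2 * (d + m : ℕ)) := by
  rw [Nat.cast_choose ℝ (le_add_right le_rfl), add_tsub_cancel_left,
    factorial_eq_stirlingSeq_mul hd, factorial_eq_stirlingSeq_mul hm,
    factorial_eq_stirlingSeq_mul (by omega)]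
  have key := stirlingSeq_mul_stirlingSeq_mul_sqrt_le hd hm
  have hd0 : (0 : ℝ) < d := by positivity
  have hsd := stirlingSeq_pos hd
  have hsm := stirlingSeq_pos hm
  have hrhs : stirlingSeq (d + m) * √(2 * (d + m : ℕ)) * ((d + m : ℕ) / exp 1) ^ (d + m) /
        (stirlingSeq d * √(2 * d) * (d / exp 1) ^ d * (stirlingSeq m * √(2 * m) * (m / exp 1) ^ m)) *
        d ^ d * m ^ m * √(2 * (d + m : ℕ))
      = ((d + m : ℕ) : ℝ) ^ (d + m) *
        ((d + m) * stirlingSeq (d + m) / (stirlingSeq d * stirlingSeq m * √(d * m))) := by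
    simp only [sqrt_mul zero_le_two, sqrt_mul hd0.le, div_pow, pow_add]
    field_simp
    rw [sq_sqrt (by positivity)]
    push_cast
    ring
  rw [hrhs]
  have hden : 0 < stirlingSeq d * stirlingSeq m * √(d * m) :=
    mul_pos (mul_pos hsd hsm) (sqrt_pos.mpr (by positivity))
  exact le_mul_of_one_le_right (by positivity) ((one_le_div hden).mpr key)

lemma two_rpow_neg_mul_klBin (t : ℝ) {a p : ℝ} (ha0 : 0 < a) (ha1 : a < 1) (hp0 : 0 < p)
    (hp1 : p < 1) :
    (2 : ℝ) ^ (-t * klBin a p) = (p / a) ^ (t * a) * ((1 - p) / (1 - a)) ^ (t * (1 - a)) := by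
  have hlogb (x y : ℝ) : logb 2 (x / y) = -logb 2 (y / x) := by rw [← logb_inv, inv_div]
  rw [← rpow_logb two_pos one_lt_two.ne' (div_pos hp0 ha0),
    ← rpow_logb two_pos one_lt_two.ne' (div_pos (sub_pos.mpr hp1) (sub_pos.mpr ha1)),
    ← rpow_mul zero_le_two, ← rpow_mul zero_le_two, ← rpow_add two_pos, klBin, hlogb a, hlogb (1 - a)]
  ring_nf

lemma div_sqrt_le_choose_mul_pow_mul_pow {d m : ℕ} (hd : d ≠ 0) (hm : m ≠ 0) {p : ℝ}
    (hp0 : 0 ≤ p) (hp1 : p ≤ 1) :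
    (p / (d / (d + m : ℕ))) ^ d * ((1 - p) / (m / (d + m : ℕ))) ^ m / √(2 * (d + m : ℕ))
      ≤ (d + m).choose d * p ^ d * (1 - p) ^ m := by
  have hlhs : (p / (d / (d + m : ℕ))) ^ d * ((1 - p) / (m / (d + m : ℕ))) ^ m
      = p ^ d * (1 - p) ^ m * (((d + m : ℕ) : ℝ) ^ (d + m) / (d ^ d * m ^ m)) := by
    rw [div_div_eq_mul_div, div_div_eq_mul_div, div_pow, div_pow, mul_pow, mul_pow, pow_add]
    field_simp
  rw [hlhs, div_le_iff₀ (by positivity), mul_assoc, mul_comm _ (p ^ d), mul_assoc (p ^ d),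
    mul_comm _ ((1 - p) ^ m), mul_assoc, mul_assoc]
  gcongr
  rw [div_le_iff₀ (by positivity)]
  calc ((d + m : ℕ) : ℝ) ^ (d + m)
      ≤ (d + m).choose d * d ^ d * m ^ m * √(2 * (d + m : ℕ)) := add_pow_add_le_choose_mul_sqrt hd hm
    _ = _ := by ring

lemma choose_mul_pow_mul_pow_le_sum_range_ite {n d : ℕ} (hdn : d ≤ n) {p x : ℝ} (hp0 : 0 ≤ p)
    (hp1 : p ≤ 1) (hdx : (d : ℝ) ≤ x) :
    (n.choose d : ℝ) * p ^ d * (1 - p) ^ (n - d)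
      ≤ ∑ k ∈ Finset.range (n + 1),
          (if (k : ℝ) ≤ x then (n.choose k : ℝ) * p ^ k * (1 - p) ^ (n - k) else 0) := by
  have hterm_nonneg (k : ℕ) :
      0 ≤ if (k : ℝ) ≤ x then (n.choose k : ℝ) * p ^ k * (1 - p) ^ (n - k) else 0 := by
    split_ifs
    · exact mul_nonneg (by positivity) (pow_nonneg (sub_nonneg.mpr hp1) _)
    · exact le_rfl
  refine le_trans (le_of_eq ?_) (Finset.single_le_sum (fun k _ ↦ hterm_nonneg k)
    (Finset.mem_range.mpr (Nat.lt_succ_of_le hdn)))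
  rw [if_pos hdx]

/-- lower bound on the lower tail of a Binomial(n, p): for `0 < δ < p` with
`nδ` an integer, `Pr(D ≤ nδ) ≥ 2^{-n D(δ‖p)} / √(2n)`. -/
theorem binomial_lower_tail_lower_bound (n : ℕ) (p δ : ℝ)
    (hp0 : 0 < p) (hp1 : p < 1) (hδ0 : 0 < δ) (hδp : δ < p)
    (hint : ∃ d : ℕ, (n : ℝ) * δ = d) :
    (2 : ℝ) ^ (-(n : ℝ) * klBin δ p) / Real.sqrt (2 * n)
      ≤ ∑ k ∈ Finset.range (n + 1),
          (if (k : ℝ) ≤ n * δ then (n.choose k : ℝ) * p ^ k * (1 - p) ^ (n - k) else 0) := by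
  obtain ⟨d, hd⟩ := hint
  rcases n.eq_zero_or_pos with rfl | hn
  · simp
  have hδ1 : δ < 1 := hδp.trans hp1
  have hn0 : (0 : ℝ) < n := by exact_mod_cast hn
  have hd0 : d ≠ 0 := by rintro rfl; exact (mul_pos hn0 hδ0).ne' (hd.trans Nat.cast_zero)
  have hdn : d < n := by exact_mod_cast (show (d : ℝ) < n by nlinarith)
  obtain ⟨m, rfl⟩ := Nat.exists_eq_add_of_le hdn.le
  have hδ : δ = d / (d + m : ℕ) := by rw [eq_div_iff hn0.ne', mul_comm, hd]
  have h1δ : 1 - δ = m / (d + m : ℕ) := by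
    rw [eq_div_iff hn0.ne']; push_cast at hd ⊢; linear_combination -hd
  calc (2 : ℝ) ^ (-((d + m : ℕ) : ℝ) * klBin δ p) / √(2 * (d + m : ℕ))
      = (p / δ) ^ d * ((1 - p) / (1 - δ)) ^ m / √(2 * (d + m : ℕ)) := by
        rw [two_rpow_neg_mul_klBin _ hδ0 hδ1 hp0 hp1, hd, ← rpow_natCast, ← rpow_natCast,
          h1δ, mul_div_cancel₀ _ hn0.ne']
    _ ≤ (d + m).choose d * p ^ d * (1 - p) ^ m := by
        rw [h1δ, hδ]
        exact div_sqrt_le_choose_mul_pow_mul_pow hd0 (by omega) hp0.le hp1.le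
    _ ≤ _ := by
        simpa only [add_tsub_cancel_left] using
          choose_mul_pow_mul_pow_le_sum_range_ite (Nat.le_add_right d m) hp0.le hp1.le hd.ge
end

section
/- Let X₁ⁿ, …, X_mⁿ be m mutually independent sequences in 𝔛ⁿ with i.i.d. entries distributed according to p_X, let q̂ = Σ_x p_X(x)², and let δ ≤ 1 − q̂. Then the probability that there exists some i ∈ {2,…,m} with d_H(X₁ⁿ, X_iⁿ) ≤ nδ is at most (m−1)·2^{−n·D(δ‖1−q̂)}. -/
lemma sum_pi_eq_prod {ι V : Type*} [Fintype ι] [DecidableEq ι] [Fintype V]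
    (f : ι → V → ℝ) :
    ∑ X : ι → V, ∏ i, f i (X i) = ∏ i, ∑ v, f i v := by
  rw [Finset.prod_univ_sum (fun _ => Finset.univ) f, Fintype.piFinset_univ]

lemma key_id (Q δ : ℝ) (hQ : 0 < Q) (hδ : 0 < δ) (h1 : δ ≤ 1 - Q) (n : ℕ) :
    (δ * Q / ((1 - Q) * (1 - δ))) ^ (-((n:ℝ) * δ))
      * (δ * Q / ((1 - Q) * (1 - δ)) + (1 - δ * Q / ((1 - Q) * (1 - δ))) * Q) ^ n
    = (2:ℝ) ^ (-(n : ℝ) * klBin δ (1 - Q)) := by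
  have h1Q : (0:ℝ) < 1 - Q := lt_of_lt_of_le hδ h1
  have h1δ : (0:ℝ) < 1 - δ := by nlinarith
  set θ := δ * Q / ((1 - Q) * (1 - δ)) with hθdef
  have hθpos : 0 < θ := div_pos (mul_pos hδ hQ) (mul_pos h1Q h1δ)
  have hA : θ + (1 - θ) * Q = Q / (1 - δ) := by
    rw [hθdef]; field_simp; ring
  have hApos : (0:ℝ) < Q / (1 - δ) := div_pos hQ h1δ
  have hlog2 : Real.log 2 ≠ 0 := ne_of_gt (Real.log_pos (by norm_num))
  rw [hA]
  rw [Real.rpow_def_of_pos hθpos, Real.rpow_def_of_pos (by norm_num : (0:ℝ) < 2)]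
  rw [← Real.exp_log hApos, ← Real.exp_nat_mul, ← Real.exp_add]
  congr 1
  have hlθ : Real.log θ = Real.log δ + Real.log Q - (Real.log (1 - Q) + Real.log (1 - δ)) := by
    rw [hθdef, Real.log_div (by positivity) (by positivity),
      Real.log_mul (ne_of_gt hδ) (ne_of_gt hQ),
      Real.log_mul (ne_of_gt h1Q) (ne_of_gt h1δ)]
  have hlA : Real.log (Q / (1 - δ)) = Real.log Q - Real.log (1 - δ) :=
    Real.log_div (ne_of_gt hQ) (ne_of_gt h1δ)
  rw [hlθ, hlA]
  unfold klBin
  rw [Real.logb, Real.logb, sub_sub_cancel,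
    Real.log_div (ne_of_gt hδ) (ne_of_gt h1Q),
    Real.log_div (ne_of_gt h1δ) (ne_of_gt hQ)]
  field_simp
  ring

open Classical in
lemma pair_bound {𝔛 : Type*} [Fintype 𝔛] [DecidableEq 𝔛]
    (pX : 𝔛 → ℝ) (hnn : ∀ x, 0 ≤ pX x) (hsum : ∑ x, pX x = 1)
    (n : ℕ) (δ : ℝ) (hδ : δ ≤ 1 - ∑ x, (pX x) ^ 2) :
    ∑ y : Fin n → 𝔛, ∑ z : Fin n → 𝔛,
      (∏ j, pX (y j)) * (∏ j, pX (z j)) *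
        (if (hammingDist y z : ℝ) ≤ ↑n * δ then (1:ℝ) else 0)
      ≤ (2:ℝ) ^ (-(n : ℝ) * klBin δ (1 - ∑ x, (pX x) ^ 2)) := by
  set Q := ∑ x, (pX x) ^ 2 with hQdef
  -- positivity of Q
  have hex : ∃ x, 0 < pX x := by
    by_contra h
    push_neg at h
    have : ∑ x, pX x = 0 := Finset.sum_eq_zero fun x _ => le_antisymm (h x) (hnn x)
    rw [hsum] at this; norm_num at this
  obtain ⟨x₀, hx₀⟩ := hex
  have hQpos : 0 < Q := by
    have h1 : (pX x₀) ^ 2 ≤ Q :=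
      Finset.single_le_sum (fun x _ => sq_nonneg (pX x)) (Finset.mem_univ x₀)
    nlinarith
  have hwnn : ∀ y : Fin n → 𝔛, 0 ≤ ∏ j, pX (y j) :=
    fun y => Finset.prod_nonneg fun j _ => hnn (y j)
  rcases lt_trichotomy δ 0 with hneg | rfl | hpos
  · -- δ < 0
    rcases Nat.eq_zero_or_pos n with rfl | hn
    · -- n = 0
      have hcond : ∀ y z : Fin 0 → 𝔛,
          ((hammingDist y z : ℝ) ≤ ↑(0:ℕ) * δ) := by
        intro y z
        have : y = z := Subsingleton.elim y z
        simp [this]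
      have hone : ∀ y z : Fin 0 → 𝔛,
          (∏ j, pX (y j)) * (∏ j, pX (z j)) *
              (if (hammingDist y z : ℝ) ≤ ↑(0:ℕ) * δ then (1:ℝ) else 0) = 1 := by
        intro y z
        rw [if_pos (hcond y z)]
        simp
      simp only [hone, Finset.sum_const, Finset.card_univ]
      have hcard : Fintype.card (Fin 0 → 𝔛) = 1 := by simp
      rw [hcard]
      norm_num
    · -- n ≥ 1 : event empty
      have hcond : ∀ y z : Fin n → 𝔛, ¬ ((hammingDist y z : ℝ) ≤ ↑n * δ) := by
        intro y z h
        have h2 : (n:ℝ) * δ < 0 := mul_neg_of_pos_of_neg (by exact_mod_cast hn) hneg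
        have h3 : (0:ℝ) ≤ (hammingDist y z : ℝ) := Nat.cast_nonneg _
        linarith
      have : ∀ y z : Fin n → 𝔛,
          (∏ j, pX (y j)) * (∏ j, pX (z j)) *
            (if (hammingDist y z : ℝ) ≤ ↑n * δ then (1:ℝ) else 0) = 0 := by
        intro y z; rw [if_neg (hcond y z), mul_zero]
      simp only [this, Finset.sum_const_zero]
      positivity
  · -- δ = 0
    have hcond : ∀ y z : Fin n → 𝔛,
        (if (hammingDist y z : ℝ) ≤ ↑n * 0 then (1:ℝ) else 0) = if y = z then 1 else 0 := by
      intro y z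
      rw [mul_zero]
      by_cases h : y = z
      · simp [h]
      · rw [if_neg h, if_neg]
        intro hle
        have : hammingDist y z = 0 := by exact_mod_cast le_antisymm (by exact_mod_cast hle) (Nat.zero_le _)
        exact h (hammingDist_eq_zero.mp this)
    refine le_of_eq ?_
    calc ∑ y : Fin n → 𝔛, ∑ z : Fin n → 𝔛,
          (∏ j, pX (y j)) * (∏ j, pX (z j)) *
            (if (hammingDist y z : ℝ) ≤ ↑n * 0 then (1:ℝ) else 0)
        = ∑ y : Fin n → 𝔛, ∏ j, (pX (y j)) ^ 2 := by
          apply Finset.sum_congr rfl; intro y _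
          simp_rw [hcond, mul_ite, mul_one, mul_zero, Finset.sum_ite_eq, Finset.mem_univ,
            if_pos]
          rw [← Finset.prod_mul_distrib]
          apply Finset.prod_congr rfl; intro j _; ring
      _ = Q ^ n := by
          have h2 := sum_pi_eq_prod (fun (_ : Fin n) (v : 𝔛) => (pX v) ^ 2)
          beta_reduce at h2
          rw [h2, ← hQdef]
          simp
      _ = (2:ℝ) ^ (-(n : ℝ) * klBin 0 (1 - Q)) := by
          have hkl : klBin 0 (1 - Q) = - Real.logb 2 Q := by
            unfold klBin
            simp [sub_sub_cancel, Real.logb, Real.log_div one_ne_zero (ne_of_gt hQpos)]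
            ring
          rw [hkl]
          rw [show -(n:ℝ) * - Real.logb 2 Q = Real.logb 2 Q * (n:ℝ) by ring]
          rw [Real.rpow_mul (by norm_num : (0:ℝ) ≤ 2), Real.rpow_logb (by norm_num) (by norm_num) hQpos,
            Real.rpow_natCast]
  · -- δ > 0 : Chernoff
    have h1Q : (0:ℝ) < 1 - Q := lt_of_lt_of_le hpos hδ
    have h1δ : (0:ℝ) < 1 - δ := by nlinarith
    set θ := δ * Q / ((1 - Q) * (1 - δ)) with hθdef
    have hθpos : 0 < θ := div_pos (mul_pos hpos hQpos) (mul_pos h1Q h1δ)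
    have hθ1 : θ ≤ 1 := by
      rw [hθdef, div_le_one (mul_pos h1Q h1δ)]
      nlinarith
    -- pointwise indicator bound
    have hpt : ∀ y z : Fin n → 𝔛,
        (if (hammingDist y z : ℝ) ≤ ↑n * δ then (1:ℝ) else 0)
          ≤ θ ^ ((hammingDist y z : ℝ) - ↑n * δ) := by
      intro y z
      split_ifs with h
      · exact Real.one_le_rpow_of_pos_of_le_one_of_nonpos hθpos hθ1 (by linarith)
      · exact Real.rpow_nonneg (le_of_lt hθpos) _
    have hsplit : ∀ y z : Fin n → 𝔛,
        θ ^ ((hammingDist y z : ℝ) - ↑n * δ)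
          = (∏ j, if y j ≠ z j then θ else 1) * θ ^ (-(↑n * δ)) := by
      intro y z
      rw [sub_eq_add_neg, Real.rpow_add hθpos, Real.rpow_natCast]
      congr 1
      rw [hammingDist, ← Finset.prod_const, Finset.prod_filter]
    have step1 : ∑ y : Fin n → 𝔛, ∑ z : Fin n → 𝔛,
          (∏ j, pX (y j)) * (∏ j, pX (z j)) *
            (if (hammingDist y z : ℝ) ≤ ↑n * δ then (1:ℝ) else 0)
        ≤ θ ^ (-(↑n * δ)) * ∑ y : Fin n → 𝔛, ∑ z : Fin n → 𝔛,
            ∏ j, (pX (y j) * pX (z j) * (if y j ≠ z j then θ else 1)) := by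
      rw [Finset.mul_sum]
      apply Finset.sum_le_sum; intro y _
      rw [Finset.mul_sum]
      apply Finset.sum_le_sum; intro z _
      calc (∏ j, pX (y j)) * (∏ j, pX (z j)) *
            (if (hammingDist y z : ℝ) ≤ ↑n * δ then (1:ℝ) else 0)
          ≤ (∏ j, pX (y j)) * (∏ j, pX (z j)) * θ ^ ((hammingDist y z : ℝ) - ↑n * δ) := by
            apply mul_le_mul_of_nonneg_left (hpt y z)
            exact mul_nonneg (hwnn y) (hwnn z)
        _ = θ ^ (-(↑n * δ)) * ∏ j, (pX (y j) * pX (z j) * (if y j ≠ z j then θ else 1)) := by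
            rw [hsplit y z]
            simp_rw [Finset.prod_mul_distrib]
            ring
    refine le_trans step1 ?_
    -- factorize the double sum
    have hinner : ∀ y : Fin n → 𝔛,
        ∑ z : Fin n → 𝔛, ∏ j, (pX (y j) * pX (z j) * (if y j ≠ z j then θ else 1))
          = ∏ j, (pX (y j) * (θ + (1 - θ) * pX (y j))) := by
      intro y
      have h2 := sum_pi_eq_prod (fun (j : Fin n) (v : 𝔛) => pX (y j) * pX v * (if y j ≠ v then θ else 1))
      beta_reduce at h2
      rw [h2]
      apply Finset.prod_congr rfl; intro j _
      have : ∀ v : 𝔛, pX (y j) * pX v * (if y j ≠ v then θ else 1)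
          = pX (y j) * (pX v * θ + (if v = y j then (1 - θ) * pX v else 0)) := by
        intro v
        by_cases h : y j = v
        · rw [if_neg (not_not_intro h), if_pos h.symm, h]; ring
        · rw [if_pos h, if_neg (fun hv => h hv.symm)]; ring
      simp_rw [this, ← Finset.mul_sum, Finset.sum_add_distrib, Finset.sum_ite_eq',
        Finset.mem_univ, if_pos, ← Finset.sum_mul, hsum]
      ring
    have houter : ∑ y : Fin n → 𝔛, ∏ j, (pX (y j) * (θ + (1 - θ) * pX (y j)))
        = (θ + (1 - θ) * Q) ^ n := by
      have h2 := sum_pi_eq_prod (fun (_ : Fin n) (v : 𝔛) => pX v * (θ + (1 - θ) * pX v))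
      beta_reduce at h2
      rw [h2]
      have h3 : ∑ v : 𝔛, pX v * (θ + (1 - θ) * pX v) = θ + (1 - θ) * Q := by
        have : ∀ v : 𝔛, pX v * (θ + (1 - θ) * pX v) = pX v * θ + (1 - θ) * (pX v) ^ 2 := by
          intro v; ring
        simp_rw [this, Finset.sum_add_distrib, ← Finset.sum_mul, hsum, ← Finset.mul_sum, ← hQdef]
        ring
      rw [h3]
      simp
    simp_rw [hinner]
    rw [houter]
    rw [← key_id Q δ hQpos hpos hδ n, ← hθdef]


open Finset in
lemma prod_two {ι : Type*} [Fintype ι] [DecidableEq ι] {a b : ι} (hab : a ≠ b)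
    (g : ι → ℝ) (hg : ∀ i, i ≠ a → i ≠ b → g i = 1) :
    ∏ i, g i = g a * g b := by
  rw [← Finset.mul_prod_erase Finset.univ g (Finset.mem_univ a),
    ← Finset.mul_prod_erase _ g (Finset.mem_erase.mpr ⟨Ne.symm hab, Finset.mem_univ b⟩)]
  have : ∏ x ∈ (Finset.univ.erase a).erase b, g x = 1 := by
    apply Finset.prod_eq_one
    intro i hi
    simp only [Finset.mem_erase] at hi
    exact hg i hi.2.1 hi.1
  rw [this, mul_one]

open Classical in
lemma marg {ι V : Type*} [Fintype ι] [DecidableEq ι] [Fintype V]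
    (w : V → ℝ) (hw : ∑ v, w v = 1) {a b : ι} (hab : a ≠ b) (F : V → V → ℝ) :
    ∑ X : ι → V, (∏ i, w (X i)) * F (X a) (X b)
      = ∑ y : V, ∑ z : V, w y * w z * F y z := by
  have key : ∀ X : ι → V, F (X a) (X b)
      = ∑ y : V, ∑ z : V, (if X a = y then 1 else 0) * (if X b = z then 1 else 0) * F y z := by
    intro X
    simp [ite_zero_mul, Finset.sum_ite_eq]
  calc ∑ X : ι → V, (∏ i, w (X i)) * F (X a) (X b)
      = ∑ y : V, ∑ z : V, (∑ X : ι → V, (∏ i, w (X i)) * ((if X a = y then 1 else 0) * (if X b = z then 1 else 0))) * F y z := by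
        simp_rw [key, Finset.mul_sum, Finset.sum_mul]
        rw [Finset.sum_comm]
        congr 1; ext y
        rw [Finset.sum_comm]
        congr 1; ext z
        congr 1; ext X
        ring
    _ = ∑ y : V, ∑ z : V, w y * w z * F y z := by
        congr 1; ext y; congr 1; ext z
        congr 1
        have hpt : ∀ X : ι → V, (∏ i, w (X i)) * ((if X a = y then 1 else 0) * (if X b = z then 1 else 0))
            = ∏ i, (fun i v => w v * (if i = a then (if v = y then 1 else 0) else if i = b then (if v = z then 1 else 0) else 1)) i (X i) := by
          intro X
          rw [Finset.prod_mul_distrib]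
          congr 1
          rw [prod_two hab]
          · simp [hab, Ne.symm hab]
          · intro i hia hib; simp [hia, hib]
        simp_rw [hpt]
        have h2 := sum_pi_eq_prod (fun i v => w v * (if i = a then (if v = y then 1 else 0) else if i = b then (if v = z then 1 else 0) else 1))
        beta_reduce at h2
        rw [h2]
        rw [prod_two hab (hg := ?_)]
        · simp only [if_pos rfl, Ne.symm hab, if_neg (Ne.symm hab), if_neg hab]
          simp [mul_ite, Finset.sum_ite_eq', hw]
        · intro i hia hib
          simp [hia, hib, hw]

open Classical in
/-- union bound on the adversarial collision probability: for `m` mutually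
independent rows with i.i.d. `pX` entries and `δ ≤ 1 - q̂`,
`Pr(∃ i ≠ 1 : d_H(X₁, X_i) ≤ nδ) ≤ (m - 1) · 2^{-n D(δ‖1-q̂)}`. -/
theorem collision_union_bound {𝔛 : Type*} [Fintype 𝔛] [DecidableEq 𝔛]
    (pX : 𝔛 → ℝ) (hnn : ∀ x, 0 ≤ pX x) (hsum : ∑ x, pX x = 1)
    (n m : ℕ) (hm : 0 < m) (δ : ℝ) (hδ : δ ≤ 1 - ∑ x, (pX x) ^ 2) :
    ∑ X : Fin m → Fin n → 𝔛,
        (∏ i, ∏ j, pX (X i j)) *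
          (if ∃ i : Fin m, i ≠ ⟨0, hm⟩ ∧ (hammingDist (X ⟨0, hm⟩) (X i) : ℝ) ≤ n * δ
            then 1 else 0)
      ≤ ((m : ℝ) - 1) * (2 : ℝ) ^ (-(n : ℝ) * klBin δ (1 - ∑ x, (pX x) ^ 2)) := by
  set a : Fin m := ⟨0, hm⟩ with ha
  set B := (2 : ℝ) ^ (-(n : ℝ) * klBin δ (1 - ∑ x, (pX x) ^ 2)) with hB
  have hw : ∑ Y : Fin n → 𝔛, ∏ j, pX (Y j) = 1 := by
    have h2 := sum_pi_eq_prod (fun (_ : Fin n) (v : 𝔛) => pX v)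
    beta_reduce at h2
    rw [h2]
    simp [hsum]
  have hPnn : ∀ X : Fin m → Fin n → 𝔛, 0 ≤ ∏ i, ∏ j, pX (X i j) :=
    fun X => Finset.prod_nonneg fun i _ => Finset.prod_nonneg fun j _ => hnn _
  have hind : ∀ X : Fin m → Fin n → 𝔛,
      (if ∃ i : Fin m, i ≠ a ∧ (hammingDist (X a) (X i) : ℝ) ≤ ↑n * δ then (1:ℝ) else 0)
        ≤ ∑ i ∈ Finset.univ.erase a,
            (if (hammingDist (X a) (X i) : ℝ) ≤ ↑n * δ then (1:ℝ) else 0) := by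
    intro X
    have hnn' : ∀ i ∈ Finset.univ.erase a,
        (0:ℝ) ≤ (if (hammingDist (X a) (X i) : ℝ) ≤ ↑n * δ then (1:ℝ) else 0) := by
      intro i _; split <;> norm_num
    split_ifs with h
    · obtain ⟨i, hia, hle⟩ := h
      have h1 := Finset.single_le_sum hnn' (Finset.mem_erase.mpr ⟨hia, Finset.mem_univ i⟩)
      rw [if_pos hle] at h1
      exact h1
    · exact Finset.sum_nonneg hnn'
  calc ∑ X : Fin m → Fin n → 𝔛,
        (∏ i, ∏ j, pX (X i j)) *
          (if ∃ i : Fin m, i ≠ a ∧ (hammingDist (X a) (X i) : ℝ) ≤ ↑n * δ then (1:ℝ) else 0)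
      ≤ ∑ X : Fin m → Fin n → 𝔛,
          (∏ i, ∏ j, pX (X i j)) *
            ∑ i ∈ Finset.univ.erase a,
              (if (hammingDist (X a) (X i) : ℝ) ≤ ↑n * δ then (1:ℝ) else 0) :=
        Finset.sum_le_sum fun X _ => mul_le_mul_of_nonneg_left (hind X) (hPnn X)
    _ = ∑ i ∈ Finset.univ.erase a, ∑ X : Fin m → Fin n → 𝔛,
          (∏ i', ∏ j, pX (X i' j)) *
            (if (hammingDist (X a) (X i) : ℝ) ≤ ↑n * δ then (1:ℝ) else 0) := by
        simp_rw [Finset.mul_sum]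
        rw [Finset.sum_comm]
    _ ≤ ∑ i ∈ Finset.univ.erase a, B := by
        apply Finset.sum_le_sum
        intro i hi
        have hia : a ≠ i := Ne.symm (Finset.mem_erase.mp hi).1
        have hmarg := marg (w := fun Y : Fin n → 𝔛 => ∏ j, pX (Y j)) hw hia
          (F := fun y z => if (hammingDist y z : ℝ) ≤ ↑n * δ then (1:ℝ) else 0)
        beta_reduce at hmarg
        rw [hmarg, hB]
        exact pair_bound pX hnn hsum n δ hδ
    _ = ((m : ℝ) - 1) * B := by
        rw [Finset.sum_const, Finset.card_erase_of_mem (Finset.mem_univ a),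
          Finset.card_univ, Fintype.card_fin, nsmul_eq_mul]
        congr 1
        exact Nat.cast_pred hm
end

section
/- Let (y_n) be a sequence of reals with −1 < y_n < 0 and (k_n) a sequence of positive integers. If 1 − (1 + y_n)^{k_n} → 0 as n → ∞, then y_n · k_n → 0. -/
open Filter

/-- if `-1 < y_n < 0`, `k_n ≥ 1` and `1 - (1 + y_n)^{k_n} → 0`,
then `y_n k_n → 0`. -/
theorem mul_tendsto_zero_of_pow_tendsto_one (y : ℕ → ℝ) (k : ℕ → ℕ)
    (hy1 : ∀ n, -1 < y n) (hy0 : ∀ n, y n < 0) (hk : ∀ n, 0 < k n)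
    (h : Tendsto (fun n => 1 - (1 + y n) ^ (k n)) atTop (nhds 0)) :
    Tendsto (fun n => y n * (k n : ℝ)) atTop (nhds 0) := by
  have hexp : Tendsto (fun n => Real.exp (y n * k n)) atTop (nhds 1) := by
    have hsq : Tendsto (fun n => 1 - Real.exp (y n * k n)) atTop (nhds 0) := by
      refine squeeze_zero (g := fun n => 1 - (1 + y n) ^ (k n)) ?_ ?_ h
      · intro n
        have : Real.exp (y n * k n) ≤ 1 := by
          rw [Real.exp_le_one_iff]
          exact mul_nonpos_of_nonpos_of_nonneg (hy0 n).le (Nat.cast_nonneg _)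
        linarith
      · intro n
        have h1 : (1 + y n) ^ k n ≤ Real.exp (y n * k n) := by
          have := Real.add_one_le_exp (y n)
          calc (1 + y n) ^ k n ≤ (Real.exp (y n)) ^ k n := by
                apply pow_le_pow_left₀ (by linarith [hy1 n]) (by linarith)
            _ = Real.exp (y n * k n) := by rw [← Real.exp_nat_mul]; ring_nf
        show 1 - Real.exp (y n * k n) ≤ 1 - (1 + y n) ^ (k n)
        linarith

    have := hsq.const_sub 1
    simpa using this
  have hlog := (Real.continuousAt_log (by norm_num : (1:ℝ) ≠ 0)).tendsto.comp hexp
  simpa [Real.log_exp, Function.comp_def] using hlog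
end

section
/- Let H be a Multinomial(m, p) random vector over k ≥ 2 categories with all p(i) > 0. Then the collision probability Σ_h Pr(H = h)² satisfies Σ_h Pr(H = h)² = O(m^{(1−k)/2} · polylog corrections), and in particular for any sequence m_n = ω(n^{4/(k−1)}), n² · Σ_h Pr(H = h_n)² → 0 as n → ∞ (with m = m_n). -/
/-!
The collision probability `∑_h Pr(H = h)²` is at most `max_h Pr(H = h)`, the mass at a mode `h*`
of the multinomial distribution. Moving one draw from category `i` to category `j` cannot increase
the mass at a mode, which gives `h*_i p_j ≤ (h*_j + 1) p_i`; summing over `i` yields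
`m p_j ≤ h*_j + 1`, so every count of the mode is of order `m`. Stirling's bounds on `m!` and on
each `h*_c!`, together with the Gibbs inequality, then give `Pr(H = h*) = O(m^{(1-k)/2})`, and
`n² m_n^{(1-k)/2} = (m_n / n^{4/(k-1)})^{-(k-1)/2} → 0`.
-/

open Filter

open Finset Real Asymptotics
open scoped Nat

theorem Nat.multinomial_update_succ_mul {α : Type*} [Fintype α] [DecidableEq α] (f : α → ℕ)
    (a : α) :
    Nat.multinomial univ (Function.update f a (f a + 1)) * (f a + 1) =
      (∑ b, f b + 1) * Nat.multinomial univ f := by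
  have hrest : Nat.multinomial (univ.erase a) (Function.update f a (f a + 1)) =
      Nat.multinomial (univ.erase a) f :=
    Nat.multinomial_congr fun b hb => Function.update_of_ne (ne_of_mem_erase hb) _ _
  have hsum :
      ∑ b ∈ univ.erase a, Function.update f a (f a + 1) b = ∑ b ∈ univ.erase a, f b :=
    sum_congr rfl fun b hb => Function.update_of_ne (ne_of_mem_erase hb) _ _
  rw [← insert_erase (mem_univ a), Nat.multinomial_insert (notMem_erase a univ),
    Nat.multinomial_insert (notMem_erase a univ), sum_insert (notMem_erase a univ), hrest, hsum,
    Function.update_self, add_right_comm, mul_right_comm, ← Nat.add_one_mul_choose_eq, mul_assoc]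

theorem Nat.factorial_le_exp_one_mul_sqrt_mul_pow {n : ℕ} (hn : n ≠ 0) :
    (n ! : ℝ) ≤ exp 1 * √n * (n / exp 1) ^ n := by
  obtain ⟨k, rfl⟩ := Nat.exists_eq_add_one_of_ne_zero hn
  have hseq : Stirling.stirlingSeq (k + 1) ≤ exp 1 / √2 :=
    Stirling.stirlingSeq_one ▸ Stirling.stirlingSeq'_antitone (Nat.zero_le k)
  rw [Stirling.stirlingSeq, div_le_div_iff₀ (by positivity) (by positivity),
    sqrt_mul zero_le_two] at hseq
  have h2 : (0 : ℝ) < √2 := by positivity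
  nlinarith

/-- Gibbs' inequality, via `x ≤ exp (x - 1)` applied to each `q i / n i`. -/
theorem prod_div_pow_le_one_of_sum_eq {ι : Type*} (s : Finset ι) (q : ι → ℝ) (n : ι → ℕ)
    (hq : ∀ i ∈ s, 0 ≤ q i) (hsum : ∑ i ∈ s, q i = ∑ i ∈ s, (n i : ℝ)) :
    ∏ i ∈ s, (q i / n i) ^ n i ≤ 1 := by
  have key : ∀ i ∈ s, (q i / n i) ^ n i ≤ exp (q i - n i) := by
    intro i hi
    rcases eq_or_ne (n i) 0 with h0 | h0
    · simpa [h0] using one_le_exp (hq i hi)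
    calc (q i / n i) ^ n i ≤ exp (q i / n i - 1) ^ n i :=
          pow_le_pow_left₀ (div_nonneg (hq i hi) (Nat.cast_nonneg _))
            (by linarith [add_one_le_exp (q i / n i - 1)]) _
      _ = exp (q i - n i) := by
        rw [← exp_nat_mul]
        congr 1
        field_simp
  calc ∏ i ∈ s, (q i / n i) ^ n i ≤ ∏ i ∈ s, exp (q i - n i) :=
        prod_le_prod (fun i hi => pow_nonneg (div_nonneg (hq i hi) (Nat.cast_nonneg _)) _) key
    _ = 1 := by rw [← exp_sum, sum_sub_distrib, hsum, sub_self, exp_zero]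

variable {ι : Type*} [Fintype ι]

theorem sum_update_succ [DecidableEq ι] (g : ι → ℕ) (i : ι) :
    ∑ c, Function.update g i (g i + 1) c = ∑ c, g c + 1 := by
  rw [sum_update_of_mem (mem_univ i), sum_eq_add_sum_sdiff_singleton_of_mem (mem_univ i) g]
  ring

theorem sum_prod_eq_one_of_sum_eq_one {p : ι → ℝ} (hsum : ∑ c, p c = 1) (m : ℕ) :
    ∑ x : Fin m → ι, ∏ j, p (x j) = 1 := by
  simpa [hsum] using (sum_pow' univ p m).symm

/-- `Pr(H = h)` for `H ~ Multinomial(∑ c, h c, p)`. -/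
noncomputable def multinomialMass {R : Type*} [CommSemiring R] (p : ι → R) (h : ι → ℕ) :
    R :=
  Nat.multinomial univ h * ∏ c, p c ^ h c

theorem multinomialMass_update_succ_mul {R : Type*} [CommSemiring R] [DecidableEq ι]
    (p : ι → R) (g : ι → ℕ) (i : ι) :
    multinomialMass p (Function.update g i (g i + 1)) * ((g i + 1 : ℕ) : R) =
      ((∑ c, g c + 1 : ℕ) : R) * p i * multinomialMass p g := by
  have hprod : ∏ c, p c ^ Function.update g i (g i + 1) c = p i * ∏ c, p c ^ g c := by
    rw [← mul_prod_erase univ _ (mem_univ i),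
      ← mul_prod_erase univ (fun c => p c ^ g c) (mem_univ i),
      prod_congr rfl fun c hc => by rw [Function.update_of_ne (ne_of_mem_erase hc)],
      Function.update_self, pow_succ]
    ring
  rw [multinomialMass, multinomialMass, hprod]
  calc _ = ((Nat.multinomial univ (Function.update g i (g i + 1)) * (g i + 1) : ℕ) : R) *
        (p i * ∏ c, p c ^ g c) := by push_cast; ring
    _ = _ := by rw [Nat.multinomial_update_succ_mul]; push_cast; ring

section Real

variable {p : ι → ℝ}

theorem multinomialMass_nonneg (hp : ∀ c, 0 ≤ p c) (h : ι → ℕ) :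
    0 ≤ multinomialMass p h :=
  mul_nonneg (Nat.cast_nonneg _) (prod_nonneg fun c _ => pow_nonneg (hp c) _)

theorem multinomialMass_pos (hp : ∀ c, 0 < p c) (h : ι → ℕ) : 0 < multinomialMass p h :=
  mul_pos (Nat.cast_pos.2 (Nat.multinomial_pos _ _)) (prod_pos fun c _ => pow_pos (hp c) _)

/-- Stirling's bounds for `m!` and each `(h c)!`, after which the remaining factor
`∏ c, (m p c / h c) ^ h c` is at most `1` by Gibbs' inequality. -/
theorem multinomialMass_mul_prod_sqrt_le (hp : ∀ c, 0 ≤ p c) (hsum : ∑ c, p c = 1) {m : ℕ}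
    (hm : m ≠ 0) {h : ι → ℕ} (hhm : ∑ c, h c = m) (hh : ∀ c, h c ≠ 0) :
    multinomialMass p h * ∏ c, √(2 * π * h c) ≤ exp 1 * √m := by
  set D := ∏ c, ((h c : ℝ) / exp 1) ^ h c
  have hD : 0 < D := prod_pos fun c _ => by have := hh c; positivity
  have hspec : multinomialMass p h * ∏ c, ((h c)! : ℝ) = m ! * ∏ c, p c ^ h c := by
    have := congrArg (Nat.cast : ℕ → ℝ) (Nat.multinomial_spec univ h)
    push_cast [hhm] at this
    rw [multinomialMass, ← this]
    ring
  have hlow : ∏ c, (√(2 * π * h c) * ((h c : ℝ) / exp 1) ^ h c) ≤ ∏ c, ((h c)! : ℝ) :=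
    prod_le_prod (fun c _ => by positivity) fun c _ => Stirling.le_factorial_stirling (h c)
  have hsplit : ((m : ℝ) / exp 1) ^ m * ∏ c, p c ^ h c =
      D * ∏ c, ((m * p c) / h c) ^ h c := by
    rw [← hhm, ← prod_pow_eq_pow_sum, ← prod_mul_distrib, ← prod_mul_distrib]
    refine prod_congr rfl fun c _ => ?_
    have : (h c : ℝ) ≠ 0 := Nat.cast_ne_zero.2 (hh c)
    rw [← mul_pow, ← mul_pow]
    congr 1
    field_simp
  have hgibbs : ∏ c, ((m * p c) / h c) ^ h c ≤ 1 :=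
    prod_div_pow_le_one_of_sum_eq univ _ h (fun c _ => by have := hp c; positivity)
      (by rw [← mul_sum, hsum, mul_one]; exact_mod_cast hhm.symm)
  have hW := multinomialMass_nonneg hp h
  refine le_of_mul_le_mul_right ?_ hD
  calc (multinomialMass p h * ∏ c, √(2 * π * h c)) * D
      = multinomialMass p h * ∏ c, (√(2 * π * h c) * ((h c : ℝ) / exp 1) ^ h c) := by
        rw [prod_mul_distrib]; ring
    _ ≤ multinomialMass p h * ∏ c, ((h c)! : ℝ) := mul_le_mul_of_nonneg_left hlow hW
    _ = m ! * ∏ c, p c ^ h c := hspec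
    _ ≤ exp 1 * √m * ((m : ℝ) / exp 1) ^ m * ∏ c, p c ^ h c :=
        mul_le_mul_of_nonneg_right (Nat.factorial_le_exp_one_mul_sqrt_mul_pow hm)
          (prod_nonneg fun c _ => pow_nonneg (hp c) _)
    _ = exp 1 * √m * D * ∏ c, ((m * p c) / h c) ^ h c := by rw [mul_assoc, hsplit]; ring
    _ ≤ exp 1 * √m * D := mul_le_of_le_one_right (by positivity) hgibbs

section Mode

variable [DecidableEq ι]

variable (p) in
def IsMultinomialMode (m : ℕ) (h : ι → ℕ) : Prop :=
  h ∈ piAntidiag univ m ∧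
    ∀ g ∈ piAntidiag univ m, multinomialMass p g ≤ multinomialMass p h

variable (p) in
theorem exists_isMultinomialMode [Nonempty ι] (m : ℕ) :
    ∃ h, IsMultinomialMode p m h :=
  exists_max_image (piAntidiag univ m) (multinomialMass p)
    ⟨Pi.single (Classical.arbitrary ι) m, by simp⟩

variable {m : ℕ} {h : ι → ℕ}

/-- Compares the mass at the mode with the mass after moving one draw from `i` to `j`. -/
theorem IsMultinomialMode.mul_le_succ_mul (hmode : IsMultinomialMode p m h)
    (hp : ∀ c, 0 < p c) (i j : ι) :
    h i * p j ≤ (h j + 1) * p i := by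
  rcases eq_or_ne (h i) 0 with h0 | h0
  · rw [h0, Nat.cast_zero, zero_mul]
    exact mul_nonneg (by positivity) (hp i).le
  set g := Function.update h i (h i - 1)
  have hgi : g i + 1 = h i := by simp only [g, Function.update_self]; omega
  have hgh : Function.update g i (g i + 1) = h := by
    rw [hgi, Function.update_idem, Function.update_eq_self]
  have hgm : ∑ c, g c + 1 = m := by
    rw [← sum_update_succ, hgh]
    exact (mem_piAntidiag.1 hmode.1).1
  have hgj : g j ≤ h j := by
    simp only [g, Function.update_apply]
    split_ifs with hji
    · subst hji; omega
    · rfl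
  have hmem : Function.update g j (g j + 1) ∈ piAntidiag univ m := by
    simp [mem_piAntidiag, sum_update_succ, hgm]
  have hi := multinomialMass_update_succ_mul p g i
  have hj := multinomialMass_update_succ_mul p g j
  rw [hgh, hgi, hgm] at hi
  rw [hgm] at hj
  refine le_of_mul_le_mul_right ?_ (multinomialMass_pos hp h)
  calc h i * p j * multinomialMass p h = p j * (multinomialMass p h * (h i : ℕ)) := by ring
    _ = p i * (multinomialMass p (Function.update g j (g j + 1)) * (g j + 1 : ℕ)) := by
        rw [hi, hj]; ring
    _ ≤ p i * (multinomialMass p h * (h j + 1 : ℕ)) := by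
        gcongr
        · exact (hp i).le
        · exact multinomialMass_nonneg (fun c => (hp c).le) h
        · exact hmode.2 _ hmem
    _ = (h j + 1) * p i * multinomialMass p h := by push_cast; ring

theorem IsMultinomialMode.mul_le_succ (hmode : IsMultinomialMode p m h) (hp : ∀ c, 0 < p c)
    (hsum : ∑ c, p c = 1) (j : ι) :
    m * p j ≤ h j + 1 := by
  have := sum_le_sum fun i (_ : i ∈ univ) => hmode.mul_le_succ_mul hp i j
  rwa [← sum_mul, ← mul_sum, hsum, mul_one, ← Nat.cast_sum,
    (mem_piAntidiag.1 hmode.1).1] at this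

theorem IsMultinomialMode.multinomialMass_le (hmode : IsMultinomialMode p m h)
    (hp : ∀ c, 0 < p c) (hsum : ∑ c, p c = 1) (hlarge : ∀ c, 1 < m * p c) :
    multinomialMass p h ≤
      exp 1 / (∏ c, √(π * p c)) * (m : ℝ) ^ ((1 - Fintype.card ι : ℝ) / 2) := by
  have hpos : ∀ c, h c ≠ 0 := fun c => by
    have := (hlarge c).trans_le (hmode.mul_le_succ hp hsum c)
    exact_mod_cast (by linarith : (0 : ℝ) < h c).ne'
  obtain ⟨c₀, -⟩ := nonempty_of_sum_ne_zero (hsum.symm ▸ one_ne_zero : ∑ c, p c ≠ 0)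
  have hm : 0 < (m : ℝ) := by nlinarith [hlarge c₀, hp c₀]
  have hprod : √m ^ Fintype.card ι * ∏ c, √(π * p c) ≤ ∏ c, √(2 * π * h c) := by
    rw [← card_univ, ← prod_const, ← prod_mul_distrib]
    refine prod_le_prod (fun c _ => by positivity) fun c _ => ?_
    rw [← sqrt_mul hm.le]
    refine sqrt_le_sqrt ?_
    have := hmode.mul_le_succ hp hsum c
    have : (1 : ℝ) ≤ h c := by exact_mod_cast Nat.one_le_iff_ne_zero.2 (hpos c)
    nlinarith [pi_pos]
  have hstirling := multinomialMass_mul_prod_sqrt_le (fun c => (hp c).le) hsum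
    (by exact_mod_cast hm.ne') (mem_piAntidiag.1 hmode.1).1 hpos
  have hrpow : √m / √m ^ Fintype.card ι = (m : ℝ) ^ ((1 - Fintype.card ι : ℝ) / 2) := by
    rw [sqrt_eq_rpow, ← rpow_natCast, ← rpow_mul hm.le, ← rpow_sub hm]
    ring_nf
  have hK : 0 < ∏ c, √(π * p c) := prod_pos fun c _ => by have := hp c; positivity
  calc multinomialMass p h ≤ exp 1 * √m / (√m ^ Fintype.card ι * ∏ c, √(π * p c)) := by
        rw [le_div_iff₀ (by positivity)]
        exact (mul_le_mul_of_nonneg_left hprod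
          (multinomialMass_nonneg (fun c => (hp c).le) h)).trans hstirling
    _ = _ := by rw [← hrpow]; field_simp

end Mode

section Histogram

variable [DecidableEq ι]

def histogram {m : ℕ} (x : Fin m → ι) (c : ι) : ℕ := #{j | x j = c}

theorem histogram_mem_piAntidiag {m : ℕ} (x : Fin m → ι) :
    histogram x ∈ piAntidiag univ m := by
  rw [mem_piAntidiag]
  refine ⟨?_, fun c _ => mem_univ c⟩
  unfold histogram
  simpa using (card_eq_sum_card_fiberwise (f := x) (s := univ) (t := univ) (by simp)).symm

/-- Compare the coefficients of `X^h` in `(∑ c, p c • X c) ^ m`, expanded by the multinomial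
theorem and as a sum over all sequences of draws. -/
theorem sum_prod_filter_histogram_eq {R : Type*} [CommSemiring R] (p : ι → R) {m : ℕ}
    (h : ι → ℕ) (hh : ∑ c, h c = m) :
    ∑ x : Fin m → ι with histogram x = h, ∏ j, p (x j) = multinomialMass p h := by
  open MvPolynomial in
  let toFinsupp : (ι → ℕ) ≃ (ι →₀ ℕ) := Finsupp.equivFunOnFinite.symm
  have hmono (x : Fin m → ι) :
      ∏ j, p (x j) • (X (x j) : MvPolynomial ι R) =
        monomial (toFinsupp (histogram x)) (∏ j, p (x j)) := by
    have : toFinsupp (histogram x) = ∑ j, Finsupp.single (x j) 1 := by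
      ext c
      simp only [toFinsupp, Finsupp.coe_equivFunOnFinite_symm, histogram,
        Finsupp.finsetSum_apply, Finsupp.single_apply, card_filter]
    rw [this, monomial_sum_prod]
    simp [X, smul_monomial]
  have hpow := congrArg (coeff (toFinsupp h))
    (sum_pow' univ (fun c => p c • (X c : MvPolynomial ι R)) m)
  rw [coeff_linearCombination_X_pow_of_fintype, Fintype.piFinset_univ, coeff_sum] at hpow
  simp only [hmono, coeff_monomial] at hpow
  rw [Finsupp.sum_fintype _ _ (fun _ => rfl), if_pos (by simpa [toFinsupp] using hh),
    Finsupp.multinomial_eq_of_support_subset (subset_univ _),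
    Finsupp.prod_fintype _ _ (fun _ => pow_zero _)] at hpow
  simpa [toFinsupp, sum_filter, multinomialMass] using hpow.symm

variable (p) in
noncomputable def histogramCollisionProb (m : ℕ) : ℝ :=
  ∑ x : Fin m → ι, ∑ y : Fin m → ι,
    (∏ j, p (x j)) * (∏ j, p (y j)) * if histogram x = histogram y then 1 else 0

variable (p) in
theorem histogramCollisionProb_eq (m : ℕ) :
    histogramCollisionProb p m =
      ∑ x : Fin m → ι, (∏ j, p (x j)) * multinomialMass p (histogram x) := by
  refine sum_congr rfl fun x _ => ?_
  rw [← sum_prod_filter_histogram_eq p _ (mem_piAntidiag.1 (histogram_mem_piAntidiag x)).1,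
    mul_sum, sum_filter]
  refine sum_congr rfl fun y _ => ?_
  simp only [eq_comm (a := histogram y), mul_ite, mul_one, mul_zero]

theorem histogramCollisionProb_nonneg (hp : ∀ c, 0 ≤ p c) (m : ℕ) :
    0 ≤ histogramCollisionProb p m := by
  rw [histogramCollisionProb_eq]
  exact sum_nonneg fun x _ =>
    mul_nonneg (prod_nonneg fun j _ => hp (x j)) (multinomialMass_nonneg hp _)

theorem IsMultinomialMode.histogramCollisionProb_le {m : ℕ} {h : ι → ℕ}
    (hmode : IsMultinomialMode p m h) (hp : ∀ c, 0 ≤ p c) (hsum : ∑ c, p c = 1) :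
    histogramCollisionProb p m ≤ multinomialMass p h := by
  rw [histogramCollisionProb_eq]
  calc ∑ x : Fin m → ι, (∏ j, p (x j)) * multinomialMass p (histogram x)
      ≤ ∑ x : Fin m → ι, (∏ j, p (x j)) * multinomialMass p h :=
        sum_le_sum fun x _ => mul_le_mul_of_nonneg_left
          (hmode.2 _ (histogram_mem_piAntidiag x)) (prod_nonneg fun j _ => hp (x j))
    _ = multinomialMass p h := by rw [← sum_mul, sum_prod_eq_one_of_sum_eq_one hsum, one_mul]

theorem histogramCollisionProb_isBigO (hp : ∀ c, 0 < p c) (hsum : ∑ c, p c = 1) :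
    histogramCollisionProb p =O[atTop]
      fun m : ℕ => (m : ℝ) ^ ((1 - Fintype.card ι : ℝ) / 2) := by
  have : Nonempty ι :=
    univ_nonempty_iff.1 (nonempty_of_sum_ne_zero (hsum.symm ▸ one_ne_zero : ∑ c, p c ≠ 0))
  have hlarge : ∀ᶠ m : ℕ in atTop, ∀ c, 1 < m * p c := eventually_all.2 fun c =>
    (tendsto_natCast_atTop_atTop.atTop_mul_const (hp c)).eventually_gt_atTop 1
  refine IsBigO.of_bound (exp 1 / ∏ c, √(π * p c)) ?_
  filter_upwards [hlarge] with m hm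
  obtain ⟨h, hmode⟩ := exists_isMultinomialMode p m
  rw [norm_of_nonneg (histogramCollisionProb_nonneg (fun c => (hp c).le) m),
    norm_of_nonneg (by positivity)]
  exact (hmode.histogramCollisionProb_le (fun c => (hp c).le) hsum).trans
    (hmode.multinomialMass_le hp hsum hm)

end Histogram

end Real

open Classical in
/-- Lemma 1, asymptotic uniqueness of histograms: for a distribution `p`
over `k ≥ 2` categories with all probabilities positive, if `m_n = ω(n^{4/(k-1)})`, then
`n² · Pr(two independent Multinomial(m_n, p) histograms coincide) → 0`. -/
theorem histogram_collision_tendsto_zero (k : ℕ) (hk : 2 ≤ k)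
    (p : Fin k → ℝ) (hpos : ∀ i, 0 < p i) (hsum : ∑ i, p i = 1)
    (m : ℕ → ℕ)
    (hm : Tendsto (fun n => (m n : ℝ) / (n : ℝ) ^ ((4 : ℝ) / ((k : ℝ) - 1))) atTop atTop) :
    Tendsto (fun n : ℕ => (n : ℝ) ^ 2 *
        ∑ X : Fin (m n) → Fin k, ∑ Y : Fin (m n) → Fin k,
          (∏ j, p (X j)) * (∏ j, p (Y j)) *
            (if ∀ c : Fin k,
                (Finset.univ.filter fun j => X j = c).card
                  = (Finset.univ.filter fun j => Y j = c).card
              then 1 else 0))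
      atTop (nhds 0) := by
  have hk1 : (0 : ℝ) < k - 1 := by
    have : (2 : ℝ) ≤ k := by exact_mod_cast hk
    linarith
  have hmtop : Tendsto m atTop atTop := by
    refine tendsto_natCast_atTop_iff.1 (tendsto_atTop_mono' atTop ?_ hm)
    filter_upwards [eventually_ge_atTop 1] with n hn
    exact div_le_self (Nat.cast_nonneg _) (one_le_rpow (by exact_mod_cast hn) (by positivity))
  have hO : (fun n : ℕ => (n : ℝ) ^ 2 * histogramCollisionProb p (m n)) =O[atTop]
      fun n => (n : ℝ) ^ 2 * (m n : ℝ) ^ ((1 - k : ℝ) / 2) := by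
    simpa using (isBigO_refl _ atTop).mul
      ((histogramCollisionProb_isBigO hpos hsum).comp_tendsto hmtop)
  have hrate : Tendsto (fun n : ℕ => (n : ℝ) ^ 2 * (m n : ℝ) ^ ((1 - k : ℝ) / 2)) atTop
      (nhds 0) := by
    refine ((tendsto_rpow_neg_atTop (by positivity : 0 < ((k : ℝ) - 1) / 2)).comp hm).congr
      fun n => ?_
    have hexp : 4 / ((k : ℝ) - 1) * -(((k : ℝ) - 1) / 2) = -2 := by field_simp; norm_num
    rw [Function.comp_apply, div_rpow (Nat.cast_nonneg _) (by positivity),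
      ← rpow_mul (Nat.cast_nonneg _), hexp, rpow_neg (Nat.cast_nonneg (n : ℕ)), div_inv_eq_mul,
      rpow_two, mul_comm]
    congr 2
    ring
  convert hO.trans_tendsto hrate using 3 with n
  simp only [histogramCollisionProb, histogram, funext_iff]
end
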